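/- Every nonzero vector Ψ ∈ ℂ² ⊗ ℂ² ⊗ ℂ² is SLOCC-equivalent to (at least) one of the following six canonical states: (000): e₁⊗e₁⊗e₁; (0₁Ψ⁺₂₃): e₁⊗e₁⊗e₁ + e₁⊗e₂⊗e₂; (0₂Ψ⁺₁₃): e₁⊗e₁⊗e₁ + e₂⊗e₁⊗e₂; (0₃Ψ⁺₁₂): e₁⊗e₁⊗e₁ + e₂⊗e₂⊗e₁; (GHZ): e₁⊗e₁⊗e₁ + e₂⊗e₂⊗e₂; (W): e₁⊗e₁⊗e₂ + e₁⊗e₂⊗e₁ + e₂⊗e₁⊗e₁. That is, there exist invertible linear maps F¹, F², F³ on ℂ² such that (F¹ ⊗ F² ⊗ F³)(Ψ) equals one of these six vectors. -/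

import Mathlib

open scoped TensorProduct

/-- The standard basis vectors of `ℂ²` (`e 0 = e₁`, `e 1 = e₂`). -/
noncomputable def e (i : Fin 2) : Fin 2 → ℂ := Pi.single i 1

/-- The space of three qubits, `ℂ² ⊗ ℂ² ⊗ ℂ²`. -/
abbrev Qubit3 := (Fin 2 → ℂ) ⊗[ℂ] ((Fin 2 → ℂ) ⊗[ℂ] (Fin 2 → ℂ))

/-- The action of a triple of linear maps on the three-qubit space. -/
noncomputable def map3 (F1 F2 F3 : (Fin 2 → ℂ) →ₗ[ℂ] (Fin 2 → ℂ)) :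
    Qubit3 →ₗ[ℂ] Qubit3 :=
  TensorProduct.map F1 (TensorProduct.map F2 F3)

open Matrix

set_option synthInstance.maxHeartbeats 1000000
set_option maxHeartbeats 1000000

noncomputable section SLOCCAux


abbrev MatC := Matrix (Fin 2) (Fin 2) ℂ

def Em (i j : Fin 2) : MatC := Matrix.single i j 1

def Jm : MatC := !![0,1;1,0]

/-- The SLOCC action on pairs of slice matrices. -/
def act (A P Q : MatC) (p : MatC × MatC) : MatC × MatC :=
  (A 0 0 • (P * p.1 * Q) + A 0 1 • (P * p.2 * Q),
   A 1 0 • (P * p.1 * Q) + A 1 1 • (P * p.2 * Q))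

def SRel (p q : MatC × MatC) : Prop :=
  ∃ A P Q : MatC, A.det ≠ 0 ∧ P.det ≠ 0 ∧ Q.det ≠ 0 ∧ act A P Q p = q

lemma act_act (A P Q A' P' Q' : MatC) (p : MatC × MatC) :
    act A' P' Q' (act A P Q p) = act (A' * A) (P' * P) (Q * Q') p := by
  simp only [act, Prod.mk.injEq, Matrix.mul_add, Matrix.add_mul, Matrix.mul_smul,
    Matrix.smul_mul, mul_apply, Fin.sum_univ_two, smul_smul, smul_add, Matrix.mul_assoc]
  constructor <;> module

lemma SRel.trans {p q r : MatC × MatC} (h1 : SRel p q) (h2 : SRel q r) : SRel p r := by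
  obtain ⟨A, P, Q, hA, hP, hQ, hact⟩ := h1
  obtain ⟨A', P', Q', hA', hP', hQ', hact'⟩ := h2
  exact ⟨A' * A, P' * P, Q * Q', by simp [det_mul, hA, hA', mul_ne_zero],
    by simp [det_mul, hP, hP', mul_ne_zero], by simp [det_mul, hQ, hQ', mul_ne_zero],
    by rw [← act_act, hact, hact']⟩


def cross (u v : Fin 2 → ℂ) : ℂ := u 0 * v 1 - u 1 * v 0

lemma vec_ne_zero {u : Fin 2 → ℂ} (h : u ≠ 0) : u 0 ≠ 0 ∨ u 1 ≠ 0 := by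
  by_contra hc
  push_neg at hc
  exact h (by ext i; fin_cases i <;> simp [hc.1, hc.2])

lemma dep_of_cross {u v : Fin 2 → ℂ} (hu : u ≠ 0) (h : cross u v = 0) :
    ∃ t : ℂ, v = t • u := by
  unfold cross at h
  rcases vec_ne_zero hu with h0 | h1
  · refine ⟨v 0 / u 0, ?_⟩
    ext i; fin_cases i
    · show v 0 = v 0 / u 0 * u 0; field_simp
    · show v 1 = v 0 / u 0 * u 1; field_simp; linear_combination h
  · refine ⟨v 1 / u 1, ?_⟩
    ext i; fin_cases i
    · show v 0 = v 1 / u 1 * u 0; field_simp; linear_combination -h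
    · show v 1 = v 1 / u 1 * u 1; field_simp

/-- Explicit matrix sending `u ↦ ![1,0]` and `v ↦ ![0,1]` when `cross u v ≠ 0`. -/
lemma exists_basis_map {u v : Fin 2 → ℂ} (h : cross u v ≠ 0) :
    ∃ P : MatC, P.det ≠ 0 ∧ P.mulVec u = ![1,0] ∧ P.mulVec v = ![0,1] := by
  have h' : u 0 * v 1 - u 1 * v 0 ≠ 0 := h
  refine ⟨!![v 1 / cross u v, -(v 0) / cross u v;
            -(u 1) / cross u v, u 0 / cross u v], ?_, ?_, ?_⟩
  · have hd : Matrix.det !![v 1 / cross u v, -(v 0) / cross u v;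
        -(u 1) / cross u v, u 0 / cross u v] * cross u v = 1 := by
      simp only [det_fin_two_of, cross]
      rw [div_mul_div_comm, div_mul_div_comm, div_sub_div _ _ (mul_ne_zero h' h') (mul_ne_zero h' h'),
        div_mul_eq_mul_div, div_eq_one_iff_eq
          (mul_ne_zero (mul_ne_zero h' h') (mul_ne_zero h' h'))]
      ring
    exact left_ne_zero_of_mul_eq_one hd
  · ext i; fin_cases i <;>
      simp [mulVec, dotProduct, Fin.sum_univ_two, cross] <;>
      field_simp [show v 1 * u 0 - u 1 * v 0 ≠ 0 by rw [mul_comm]; exact h'] <;> ring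
  · ext i; fin_cases i <;>
      simp [mulVec, dotProduct, Fin.sum_univ_two, cross] <;> field_simp <;> ring

lemma exists_e0_map {u : Fin 2 → ℂ} (hu : u ≠ 0) :
    ∃ P : MatC, P.det ≠ 0 ∧ P.mulVec u = ![1,0] := by
  rcases vec_ne_zero hu with h0 | h1
  · obtain ⟨P, hd, h1, _⟩ := exists_basis_map (u := u) (v := ![0,1])
      (by simp [cross]; exact h0)
    exact ⟨P, hd, h1⟩
  · obtain ⟨P, hd, h1, _⟩ := exists_basis_map (u := u) (v := ![1,0])
      (by simp [cross]; exact h1)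
    exact ⟨P, hd, h1⟩

lemma matC_ne_zero {M : MatC} (h : M ≠ 0) :
    M 0 0 ≠ 0 ∨ M 0 1 ≠ 0 ∨ M 1 0 ≠ 0 ∨ M 1 1 ≠ 0 := by
  by_contra hc
  push_neg at hc
  exact h (by ext i j; fin_cases i <;> fin_cases j <;>
    simp [hc.1, hc.2.1, hc.2.2.1, hc.2.2.2])

lemma rank_one_decomp {M : MatC} (hM : M ≠ 0) (hd : M.det = 0) :
    ∃ u v : Fin 2 → ℂ, u ≠ 0 ∧ v ≠ 0 ∧ M = vecMulVec u v := by
  rw [det_fin_two] at hd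
  by_cases h00 : M 0 0 ≠ 0
  · refine ⟨![M 0 0, M 1 0], ![1, M 0 1 / M 0 0], ?_, ?_, ?_⟩
    · intro h; have := congrFun h 0; simp at this; exact h00 this
    · intro h; have := congrFun h 0; simp at this
    · ext i j; fin_cases i <;> fin_cases j <;>
        simp [vecMulVec] <;> field_simp <;>
        first | ring1 | linear_combination hd | linear_combination -hd
  · push_neg at h00
    have hbc : M 0 1 * M 1 0 = 0 := by linear_combination -hd + M 1 1 * h00
    by_cases h01 : M 0 1 = 0
    · refine ⟨![0, 1], ![M 1 0, M 1 1], by simp [Function.ne_iff], ?_, ?_⟩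
      · intro h
        apply hM
        have e0 := congrFun h 0; have e1 := congrFun h 1
        simp at e0 e1
        ext i j; fin_cases i <;> fin_cases j <;> simp [h00, h01, e0, e1]
      · ext i j; fin_cases i <;> fin_cases j <;> simp [vecMulVec, h00, h01]
    · have h10 : M 1 0 = 0 := by
        rcases mul_eq_zero.mp hbc with h | h
        · exact absurd h h01
        · exact h
      refine ⟨![M 0 1, M 1 1], ![0, 1], ?_, by simp [Function.ne_iff], ?_⟩
      · intro h; have := congrFun h 0; simp at this; exact h01 this
      · ext i j; fin_cases i <;> fin_cases j <;> simp [vecMulVec, h00, h10]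

lemma mul_vecMulVec (P : MatC) (u v : Fin 2 → ℂ) :
    P * vecMulVec u v = vecMulVec (P.mulVec u) v := by
  ext i j
  simp [mul_apply, vecMulVec, mulVec, dotProduct, Fin.sum_univ_two]
  ring

lemma vecMulVec_mul (u v : Fin 2 → ℂ) (Q : MatC) :
    vecMulVec u v * Q = vecMulVec u (Q.transpose.mulVec v) := by
  ext i j
  simp [mul_apply, vecMulVec, mulVec, dotProduct, Fin.sum_univ_two]
  ring

lemma det_vecMulVec_add (u v u' v' : Fin 2 → ℂ) :
    (vecMulVec u v + vecMulVec u' v').det = cross u u' * cross v v' := by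
  simp [det_fin_two, vecMulVec, cross]
  ring

lemma vecMulVec_ne_zero {u v : Fin 2 → ℂ} (hu : u ≠ 0) (hv : v ≠ 0) :
    vecMulVec u v ≠ 0 := by
  obtain ⟨i, hi⟩ : ∃ i, u i ≠ 0 := by
    rcases vec_ne_zero hu with h | h; exacts [⟨0, h⟩, ⟨1, h⟩]
  obtain ⟨j, hj⟩ : ∃ j, v j ≠ 0 := by
    rcases vec_ne_zero hv with h | h; exacts [⟨0, h⟩, ⟨1, h⟩]
  intro h
  have := congrFun (congrFun h i) j
  simp [vecMulVec] at this
  tauto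

lemma smul_vecMulVec (c : ℂ) (u v : Fin 2 → ℂ) :
    vecMulVec (c • u) v = c • vecMulVec u v ∧ vecMulVec u (c • v) = c • vecMulVec u v := by
  constructor <;> · ext i j; simp [vecMulVec]; ring

lemma det_pencil (x y : ℂ) (M N : MatC) :
    (x • M + y • N).det
      = x^2 * M.det + x*y*((M+N).det - M.det - N.det) + y^2 * N.det := by
  simp [det_fin_two, Matrix.add_apply, Matrix.smul_apply, smul_eq_mul]
  ring

lemma det_one_add (K : MatC) :
    (1 + K).det = 1 + K 0 0 + K 1 1 + K.det := by
  simp [det_fin_two, Matrix.add_apply, Matrix.one_apply]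
  ring

lemma act_one (P Q : MatC) (p : MatC × MatC) :
    act 1 P Q p = (P * p.1 * Q, P * p.2 * Q) := by
  simp [act, Matrix.one_apply]

lemma act_mix (A : MatC) (p : MatC × MatC) :
    act A 1 1 p = (A 0 0 • p.1 + A 0 1 • p.2, A 1 0 • p.1 + A 1 1 • p.2) := by
  simp [act]

lemma isUnitDet {M : MatC} (h : M.det ≠ 0) : IsUnit M.det := isUnit_iff_ne_zero.mpr h

lemma inv_det_ne_zero {M : MatC} (h : M.det ≠ 0) : M⁻¹.det ≠ 0 :=
  (Matrix.isUnit_nonsing_inv_det M (isUnitDet h)).ne_zero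

lemma vmv10_10 : vecMulVec ![(1:ℂ),0] ![(1:ℂ),0] = !![1,0;0,0] := by
  ext i j; fin_cases i <;> fin_cases j <;> simp [vecMulVec]

lemma vmv10_01 : vecMulVec ![(1:ℂ),0] ![(0:ℂ),1] = !![0,1;0,0] := by
  ext i j; fin_cases i <;> fin_cases j <;> simp [vecMulVec]

lemma vmv01_10 : vecMulVec ![(0:ℂ),1] ![(1:ℂ),0] = !![0,0;1,0] := by
  ext i j; fin_cases i <;> fin_cases j <;> simp [vecMulVec]

lemma vmv01_01 : vecMulVec ![(0:ℂ),1] ![(0:ℂ),1] = !![0,0;0,1] := by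
  ext i j; fin_cases i <;> fin_cases j <;> simp [vecMulVec]

lemma srel_pq {p : MatC × MatC} {N0 N1 : MatC} (P Q : MatC)
    (hP : P.det ≠ 0) (hQ : Q.det ≠ 0) (h0 : P * p.1 * Q = N0) (h1 : P * p.2 * Q = N1) :
    SRel p (N0, N1) :=
  ⟨1, P, Q, by simp [det_one], hP, hQ, by rw [act_one, h0, h1]⟩

lemma rel_single {M : MatC} (hM : M ≠ 0) :
    SRel (M, 0) (!![1,0;0,0], 0) ∨ SRel (M, 0) (1, 0) := by
  by_cases hd : M.det = 0
  · left
    obtain ⟨u, v, hu, hv, rfl⟩ := rank_one_decomp hM hd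
    obtain ⟨P, hP, hPu⟩ := exists_e0_map hu
    obtain ⟨R, hR, hRv⟩ := exists_e0_map hv
    refine srel_pq P Rᵀ hP (by simpa [det_transpose] using hR) ?_ ?_
    · show P * vecMulVec u v * Rᵀ = _
      rw [mul_vecMulVec, vecMulVec_mul, transpose_transpose, hPu, hRv, vmv10_10]
    · show P * (0:MatC) * Rᵀ = 0
      simp
  · right
    refine srel_pq M⁻¹ 1 (inv_det_ne_zero hd) (by simp [det_one]) ?_ (by simp)
    show M⁻¹ * M * 1 = 1
    rw [mul_one, nonsing_inv_mul M (isUnitDet hd)]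

lemma rel_common_col {u w0 w1 : Fin 2 → ℂ} (hu : u ≠ 0) (hw : cross w0 w1 ≠ 0) :
    SRel (vecMulVec u w0, vecMulVec u w1) (!![1,0;0,0], !![0,1;0,0]) := by
  obtain ⟨P, hP, hPu⟩ := exists_e0_map hu
  obtain ⟨R, hR, hR0, hR1⟩ := exists_basis_map hw
  refine srel_pq P Rᵀ hP (by simpa [det_transpose] using hR) ?_ ?_
  · show P * vecMulVec u w0 * Rᵀ = _
    rw [mul_vecMulVec, vecMulVec_mul, transpose_transpose, hPu, hR0, vmv10_10]
  · show P * vecMulVec u w1 * Rᵀ = _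
    rw [mul_vecMulVec, vecMulVec_mul, transpose_transpose, hPu, hR1, vmv10_01]

lemma rel_common_row {u0 u1 w : Fin 2 → ℂ} (hu : cross u0 u1 ≠ 0) (hw : w ≠ 0) :
    SRel (vecMulVec u0 w, vecMulVec u1 w) (!![1,0;0,0], !![0,0;1,0]) := by
  obtain ⟨P, hP, hP0, hP1⟩ := exists_basis_map hu
  obtain ⟨R, hR, hRw⟩ := exists_e0_map hw
  refine srel_pq P Rᵀ hP (by simpa [det_transpose] using hR) ?_ ?_
  · show P * vecMulVec u0 w * Rᵀ = _
    rw [mul_vecMulVec, vecMulVec_mul, transpose_transpose, hP0, hRw, vmv10_10]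
  · show P * vecMulVec u1 w * Rᵀ = _
    rw [mul_vecMulVec, vecMulVec_mul, transpose_transpose, hP1, hRw, vmv01_10]

lemma rel_ghz {u u' w w' : Fin 2 → ℂ} (huu : cross u u' ≠ 0) (hww : cross w w' ≠ 0) :
    SRel (vecMulVec u w, vecMulVec u' w') (!![1,0;0,0], !![0,0;0,1]) := by
  obtain ⟨P, hP, hP0, hP1⟩ := exists_basis_map huu
  obtain ⟨R, hR, hR0, hR1⟩ := exists_basis_map hww
  refine srel_pq P Rᵀ hP (by simpa [det_transpose] using hR) ?_ ?_
  · show P * vecMulVec u w * Rᵀ = _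
    rw [mul_vecMulVec, vecMulVec_mul, transpose_transpose, hP0, hR0, vmv10_10]
  · show P * vecMulVec u' w' * Rᵀ = _
    rw [mul_vecMulVec, vecMulVec_mul, transpose_transpose, hP1, hR1, vmv01_01]

lemma rel_w {K : MatC} (hK : K ≠ 0) (htr : K 0 0 + K 1 1 = 0) (hdet : K.det = 0) :
    SRel (1, K) (!![0,1;1,0], !![1,0;0,0]) := by
  rw [det_fin_two] at hdet
  have hKK : K * K = 0 := by
    ext i j; fin_cases i <;> fin_cases j <;>
      simp only [mul_apply, Fin.sum_univ_two, Matrix.zero_apply, Fin.mk_zero, Fin.mk_one,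
        Fin.isValue] <;>
      first
        | linear_combination K 0 0 * htr - hdet
        | linear_combination K 0 1 * htr
        | linear_combination K 1 0 * htr
        | linear_combination K 1 1 * htr - hdet
  obtain ⟨w, hw⟩ : ∃ w, K.mulVec w ≠ 0 := by
    by_cases hc : K.mulVec ![1,0] ≠ 0
    · exact ⟨![1,0], hc⟩
    · push_neg at hc
      refine ⟨![0,1], fun hc2 => hK ?_⟩
      ext i j
      have a1 := congrFun hc i; have a2 := congrFun hc2 i
      simp [mulVec, dotProduct, Fin.sum_univ_two] at a1 a2
      fin_cases j <;> simpa
  obtain ⟨u, hu_def⟩ : ∃ u, u = K.mulVec w := ⟨_, rfl⟩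
  rw [← hu_def] at hw
  have hKu : K.mulVec u = 0 := by
    rw [hu_def, mulVec_mulVec, hKK, zero_mulVec]
  have hcross : cross u w ≠ 0 := by
    intro h
    obtain ⟨t, hw'⟩ := dep_of_cross hw h
    rw [hu_def, hw', mulVec_smul, hKu, smul_zero] at hw
    exact hw rfl
  set S : MatC := !![u 0, w 0; u 1, w 1] with hS_def
  have hdS : S.det ≠ 0 := by
    simpa [hS_def, det_fin_two, cross, mul_comm] using hcross
  have hKS : K * S = S * !![0,1;0,0] := by
    have h0 := congrFun hKu 0
    have h1 := congrFun hKu 1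
    have g0 : K 0 0 * w 0 + K 0 1 * w 1 = u 0 := by
      rw [hu_def]; simp [mulVec, dotProduct, Fin.sum_univ_two]
    have g1 : K 1 0 * w 0 + K 1 1 * w 1 = u 1 := by
      rw [hu_def]; simp [mulVec, dotProduct, Fin.sum_univ_two]
    simp [mulVec, dotProduct, Fin.sum_univ_two] at h0 h1
    ext i j; fin_cases i <;> fin_cases j <;>
      simp [hS_def, mul_apply, Fin.sum_univ_two] <;>
      first
        | linear_combination h0
        | linear_combination h1
        | linear_combination g0
        | linear_combination g1
  have hE : (!![0,1;0,0] : MatC) * !![0,1;1,0] = !![1,0;0,0] := by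
    ext i j; fin_cases i <;> fin_cases j <;> simp [mul_apply, Fin.sum_univ_two]
  refine srel_pq S⁻¹ (S * !![0,1;1,0]) (inv_det_ne_zero hdS) ?_ ?_ ?_
  · rw [det_mul]
    have : (!![0,1;1,0] : MatC).det = -1 := by simp [det_fin_two]
    rw [this]
    simpa using hdS
  · show S⁻¹ * 1 * (S * !![0,1;1,0]) = _
    rw [mul_one, ← Matrix.mul_assoc, nonsing_inv_mul S (isUnitDet hdS), Matrix.one_mul]
  · show S⁻¹ * K * (S * !![0,1;1,0]) = _
    have hmid : K * (S * !![0,1;1,0]) = S * !![1,0;0,0] := by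
      rw [← Matrix.mul_assoc, hKS, Matrix.mul_assoc, hE]
    rw [Matrix.mul_assoc, hmid, ← Matrix.mul_assoc, nonsing_inv_mul S (isUnitDet hdS),
      Matrix.one_mul]

lemma neg_smul_of_add_eq_zero {r : ℂ} {M N : MatC} (h : r • M + N = 0) : N = (-r) • M := by
  rw [neg_smul]; linear_combination (norm := module) h

lemma sc1 (d0 d1 m : ℂ) (h : d0 ≠ 0) (hm : m^2 = 4*d0*d1) :
    (-m/(2*d0))^2 * d0 + (-m/(2*d0)) * m + d1 = 0 := by
  field_simp
  linear_combination (-1) * hm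

lemma sc2 (d0 d1 m : ℂ) (h : d0 ≠ 0) (hm : m^2 = 4*d0*d1) :
    (1 + -m/(2*d0))^2 * d0 + (1 + -m/(2*d0)) * m + d1 = d0 := by
  field_simp
  linear_combination (-1) * hm

lemma sc3 (d0 d1 m s : ℂ) (h : d0 ≠ 0) (hs : s^2 = m^2 - 4*d0*d1) :
    ((-m+s)/(2*d0))^2 * d0 + ((-m+s)/(2*d0)) * m + d1 = 0 := by
  field_simp
  linear_combination hs

lemma sc4 (d0 d1 m s : ℂ) (h : d0 ≠ 0) (hs : s^2 = m^2 - 4*d0*d1) :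
    ((-m-s)/(2*d0))^2 * d0 + ((-m-s)/(2*d0)) * m + d1 = 0 := by
  field_simp
  linear_combination hs

lemma sc5 (d0 d1 m s : ℂ) (h : d0 ≠ 0) (hs : s^2 = m^2 - 4*d0*d1) :
    ((((-m+s)/(2*d0)) + ((-m-s)/(2*d0)))^2 * d0
      + (((-m+s)/(2*d0)) + ((-m-s)/(2*d0))) * 2 * m + 2^2*d1) * d0 = -(s^2) := by
  field_simp
  linear_combination 4*hs

lemma main_nd {M0 M1 : MatC} (h0 : M0.det ≠ 0) (hind : ∀ t : ℂ, M1 ≠ t • M0) :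
    SRel (M0, M1) (!![1,0;0,0], !![0,0;0,1]) ∨
    SRel (M0, M1) (!![0,1;1,0], !![1,0;0,0]) := by
  obtain ⟨s, hs⟩ : ∃ s : ℂ,
      s^2 = ((M0+M1).det - M0.det - M1.det)^2 - 4*M0.det*M1.det :=
    IsAlgClosed.exists_pow_nat_eq _ two_pos
  set μ := (M0+M1).det - M0.det - M1.det with hμ
  by_cases hs0 : s = 0
  · -- W case
    right
    rw [hs0] at hs
    have hμ2 : μ^2 = 4*M0.det*M1.det := by linear_combination -hs
    set r := -μ / (2*M0.det) with hr
    have hdN1 : (r • M0 + M1).det = 0 := by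
      have hp := det_pencil r 1 M0 M1
      simp only [one_smul, one_pow, mul_one, one_mul] at hp
      rw [← hμ] at hp
      rw [hp, hr]
      exact sc1 _ _ _ h0 hμ2
    have hN1ne : r • M0 + M1 ≠ 0 := by
      intro hcon
      exact hind (-r) (neg_smul_of_add_eq_zero hcon)
    have hdsum : (M0 + (r • M0 + M1)).det = M0.det := by
      have hrw : M0 + (r • M0 + M1) = (1+r) • M0 + (1:ℂ) • M1 := by module
      rw [hrw, det_pencil, ← hμ]
      simp only [one_smul, one_pow, mul_one, one_mul]
      rw [hr]
      exact sc2 _ _ _ h0 hμ2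
    set K := M0⁻¹ * (r • M0 + M1) with hK
    have hM0K : M0 * K = r • M0 + M1 := by
      rw [hK, ← Matrix.mul_assoc, mul_nonsing_inv M0 (isUnitDet h0), Matrix.one_mul]
    have hKne : K ≠ 0 := by
      intro hcon
      rw [hcon, Matrix.mul_zero] at hM0K
      exact hN1ne hM0K.symm
    have hdetK : K.det = 0 := by rw [hK, det_mul, hdN1, mul_zero]
    have hdet1K : (1 + K).det = 1 := by
      have h1K : (1 : MatC) + K = M0⁻¹ * (M0 + (r • M0 + M1)) := by
        rw [Matrix.mul_add, nonsing_inv_mul M0 (isUnitDet h0), hK]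
      rw [h1K, det_mul, hdsum, Matrix.det_nonsing_inv, Ring.inverse_eq_inv',
        inv_mul_cancel₀ h0]
    have htr : K 0 0 + K 1 1 = 0 := by
      have := det_one_add K
      rw [hdet1K, hdetK] at this
      linear_combination -this
    have step1 : SRel (M0, M1) (1, K) := by
      refine ⟨!![1,0;r,1], M0⁻¹, 1, ?_, inv_det_ne_zero h0, by simp [det_one], ?_⟩
      · simp [det_fin_two]
      · show act _ _ _ _ = _
        unfold act
        simp only [Matrix.cons_val', Matrix.cons_val_zero, Matrix.cons_val_one,
          Matrix.head_cons, Matrix.head_fin_const, Matrix.empty_val',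
          Matrix.cons_val_fin_one]
        rw [Prod.mk.injEq]
        constructor
        · show (1:ℂ) • (M0⁻¹ * M0 * 1) + (0:ℂ) • (M0⁻¹ * M1 * 1) = 1
          rw [Matrix.mul_one, nonsing_inv_mul M0 (isUnitDet h0)]
          simp
        · show r • (M0⁻¹ * M0 * 1) + (1:ℂ) • (M0⁻¹ * M1 * 1) = K
          simp only [Matrix.mul_one, hK, Matrix.mul_add, Matrix.mul_smul,
            nonsing_inv_mul M0 (isUnitDet h0), one_smul]
    exact step1.trans (rel_w hKne htr hdetK)
  · -- GHZ case
    left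
    set r0 := (-μ + s) / (2*M0.det) with hr0
    set r1 := (-μ - s) / (2*M0.det) with hr1
    have step1 : SRel (M0, M1) (r0 • M0 + M1, r1 • M0 + M1) := by
      refine ⟨!![r0,1;r1,1], 1, 1, ?_, by simp [det_one], by simp [det_one], ?_⟩
      · simp only [det_fin_two_of, mul_one, one_mul]
        rw [hr0, hr1]
        intro hcon
        apply hs0
        field_simp at hcon
        linear_combination (1/2) * hcon
      · rw [act_mix]
        simp only [Matrix.cons_val', Matrix.cons_val_zero, Matrix.cons_val_one,
          Matrix.head_cons, Matrix.head_fin_const, Matrix.empty_val',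
          Matrix.cons_val_fin_one]
        rw [Prod.mk.injEq]
        constructor
        · show r0 • M0 + (1:ℂ) • M1 = r0 • M0 + M1
          rw [one_smul]
        · show r1 • M0 + (1:ℂ) • M1 = r1 • M0 + M1
          rw [one_smul]
    have hd0 : (r0 • M0 + M1).det = 0 := by
      have hp := det_pencil r0 1 M0 M1
      simp only [one_smul, one_pow, mul_one, one_mul] at hp
      rw [← hμ] at hp
      rw [hp, hr0]
      exact sc3 _ _ _ _ h0 hs
    have hd1 : (r1 • M0 + M1).det = 0 := by
      have hp := det_pencil r1 1 M0 M1
      simp only [one_smul, one_pow, mul_one, one_mul] at hp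
      rw [← hμ] at hp
      rw [hp, hr1]
      exact sc4 _ _ _ _ h0 hs
    have hne0 : r0 • M0 + M1 ≠ 0 := fun hcon =>
      hind (-r0) (neg_smul_of_add_eq_zero hcon)
    have hne1 : r1 • M0 + M1 ≠ 0 := fun hcon =>
      hind (-r1) (neg_smul_of_add_eq_zero hcon)
    have hdsum : ((r0 • M0 + M1) + (r1 • M0 + M1)).det ≠ 0 := by
      have hrw : (r0 • M0 + M1) + (r1 • M0 + M1) = (r0+r1) • M0 + (2:ℂ) • M1 := by
        module
      have hDval : ((r0 + r1) • M0 + (2:ℂ) • M1).det * M0.det = -(s^2) := by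
        rw [det_pencil, ← hμ, hr0, hr1]
        exact sc5 _ _ _ _ h0 hs
      rw [hrw]
      intro hcon
      rw [hcon, zero_mul] at hDval
      exact hs0 (pow_eq_zero_iff two_ne_zero |>.mp (by linear_combination hDval))
    obtain ⟨u, w, hu, hw, hN0⟩ := rank_one_decomp hne0 hd0
    obtain ⟨u', w', hu', hw', hN1⟩ := rank_one_decomp hne1 hd1
    rw [hN0, hN1, det_vecMulVec_add] at hdsum
    have hcu : cross u u' ≠ 0 := fun h => hdsum (by rw [h, zero_mul])
    have hcw : cross w w' ≠ 0 := fun h => hdsum (by rw [h, mul_zero])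
    rw [hN0, hN1] at step1
    exact step1.trans (rel_ghz hcu hcw)

lemma rel_swap (M N : MatC) : SRel (M, N) (N, M) := by
  refine ⟨!![0,1;1,0], 1, 1, by simp [det_fin_two], by simp [det_one], by simp [det_one], ?_⟩
  rw [act_mix]
  norm_num

lemma rel_drop {M : MatC} (t : ℂ) : SRel (M, t • M) (M, 0) := by
  refine ⟨!![1,0;-t,1], 1, 1, by simp [det_fin_two], by simp [det_one], by simp [det_one], ?_⟩
  rw [act_mix]
  norm_num

theorem mat_class (M0 M1 : MatC) (h : ¬(M0 = 0 ∧ M1 = 0)) :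
    SRel (M0,M1) (!![1,0;0,0], 0) ∨ SRel (M0,M1) (1, 0) ∨
    SRel (M0,M1) (!![1,0;0,0], !![0,1;0,0]) ∨ SRel (M0,M1) (!![1,0;0,0], !![0,0;1,0]) ∨
    SRel (M0,M1) (!![1,0;0,0], !![0,0;0,1]) ∨ SRel (M0,M1) (!![0,1;1,0], !![1,0;0,0]) := by
  by_cases h0 : M0 = 0
  · have hM1 : M1 ≠ 0 := fun hc => h ⟨h0, hc⟩
    have hswap : SRel (M0, M1) (M1, 0) := by
      rw [h0]; simpa using rel_swap 0 M1
    rcases rel_single hM1 with h1 | h2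
    · exact Or.inl (hswap.trans h1)
    · exact Or.inr (Or.inl (hswap.trans h2))
  by_cases hdep : ∃ t : ℂ, M1 = t • M0
  · obtain ⟨t, rfl⟩ := hdep
    have hdrop := rel_drop (M := M0) t
    rcases rel_single h0 with h1 | h2
    · exact Or.inl (hdrop.trans h1)
    · exact Or.inr (Or.inl (hdrop.trans h2))
  push_neg at hdep
  by_cases hd0 : M0.det = 0
  · by_cases hd1 : M1.det = 0
    · have hM1 : M1 ≠ 0 := fun hc => hdep 0 (by rw [hc, zero_smul])
      obtain ⟨u, w, hu, hw, hM0d⟩ := rank_one_decomp h0 hd0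
      obtain ⟨u', w', hu', hw', hM1d⟩ := rank_one_decomp hM1 hd1
      by_cases hsum : (M0 + M1).det = 0
      · -- degenerate pencil : common row or column
        have hprod : cross u u' * cross w w' = 0 := by
          rw [← det_vecMulVec_add, ← hM0d, ← hM1d]; exact hsum
        rcases mul_eq_zero.mp hprod with hcu | hcw
        · obtain ⟨c, hc⟩ := dep_of_cross hu hcu
          have hM1d' : M1 = vecMulVec u (c • w') := by
            rw [hM1d, hc, (_root_.smul_vecMulVec c u w').1, ← (_root_.smul_vecMulVec c u w').2]
          have hcross2 : cross w (c • w') ≠ 0 := by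
            intro hcon
            obtain ⟨t, ht⟩ := dep_of_cross hw hcon
            exact hdep t (by rw [hM1d', ht, (_root_.smul_vecMulVec t u w).2, ← hM0d])
          have hrel := rel_common_col hu hcross2
          rw [← hM0d, ← hM1d'] at hrel
          exact Or.inr (Or.inr (Or.inl hrel))
        · obtain ⟨c, hc⟩ := dep_of_cross hw hcw
          have hM1d' : M1 = vecMulVec (c • u') w := by
            rw [hM1d, hc, (_root_.smul_vecMulVec c u' w).2, ← (_root_.smul_vecMulVec c u' w).1]
          have hcross2 : cross u (c • u') ≠ 0 := by
            intro hcon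
            obtain ⟨t, ht⟩ := dep_of_cross hu hcon
            exact hdep t (by rw [hM1d', ht, (_root_.smul_vecMulVec t u w).1, ← hM0d])
          have hrel := rel_common_row hcross2 hw
          rw [← hM0d, ← hM1d'] at hrel
          exact Or.inr (Or.inr (Or.inr (Or.inl hrel)))
      · -- GHZ with both slices singular
        have hprod : cross u u' * cross w w' ≠ 0 := by
          rw [← det_vecMulVec_add, ← hM0d, ← hM1d]; exact hsum
        have hcu : cross u u' ≠ 0 := fun hc => hprod (by rw [hc, zero_mul])
        have hcw : cross w w' ≠ 0 := fun hc => hprod (by rw [hc, mul_zero])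
        have hrel := rel_ghz hcu hcw
        rw [← hM0d, ← hM1d] at hrel
        exact Or.inr (Or.inr (Or.inr (Or.inr (Or.inl hrel))))
    · -- M1 invertible : swap and use main_nd
      have hind' : ∀ t : ℂ, M0 ≠ t • M1 := by
        intro t hc
        by_cases ht : t = 0
        · exact h0 (by rw [hc, ht, zero_smul])
        · exact hdep t⁻¹ (by rw [hc, smul_smul, inv_mul_cancel₀ ht, one_smul])
      rcases main_nd hd1 hind' with h5 | h6
      · exact Or.inr (Or.inr (Or.inr (Or.inr (Or.inl ((rel_swap M0 M1).trans h5)))))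
      · exact Or.inr (Or.inr (Or.inr (Or.inr (Or.inr ((rel_swap M0 M1).trans h6)))))
  · rcases main_nd hd0 hdep with h5 | h6
    · exact Or.inr (Or.inr (Or.inr (Or.inr (Or.inl h5))))
    · exact Or.inr (Or.inr (Or.inr (Or.inr (Or.inr h6))))

set_option synthInstance.maxHeartbeats 1000000
set_option maxHeartbeats 1000000

def vmvBil : (Fin 2 → ℂ) →ₗ[ℂ] (Fin 2 → ℂ) →ₗ[ℂ] MatC :=
  LinearMap.mk₂ ℂ vecMulVec
    (fun u u' v => by ext i j; simp [vecMulVec]; ring)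
    (fun c u v => by ext i j; simp [vecMulVec]; ring)
    (fun u v v' => by ext i j; simp [vecMulVec]; ring)
    (fun c u v => by ext i j; simp [vecMulVec]; ring)

def sliceBil : (Fin 2 → ℂ) →ₗ[ℂ] ((Fin 2 → ℂ) ⊗[ℂ] (Fin 2 → ℂ)) →ₗ[ℂ] (MatC × MatC) :=
  LinearMap.mk₂ ℂ
    (fun u w => (u 0 • TensorProduct.lift vmvBil w, u 1 • TensorProduct.lift vmvBil w))
    (fun u u' w => by simp [add_smul, Prod.ext_iff])
    (fun c u w => by simp [mul_smul, Prod.ext_iff])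
    (fun u w w' => by simp [smul_add, Prod.ext_iff])
    (fun c u w => by
      simp only [_root_.map_smul, Prod.smul_mk, Prod.ext_iff]
      exact ⟨smul_comm _ _ _, smul_comm _ _ _⟩)

def Tmap : Qubit3 →ₗ[ℂ] MatC × MatC := TensorProduct.lift sliceBil

@[simp] lemma Tmap_tmul (u x y : Fin 2 → ℂ) :
    Tmap (u ⊗ₜ[ℂ] (x ⊗ₜ[ℂ] y)) = (u 0 • vecMulVec x y, u 1 • vecMulVec x y) := by
  simp [Tmap, sliceBil, vmvBil]

def Smap : MatC × MatC →ₗ[ℂ] Qubit3 where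
  toFun p := p.1 0 0 • (e 0 ⊗ₜ[ℂ] (e 0 ⊗ₜ[ℂ] e 0)) + p.1 0 1 • (e 0 ⊗ₜ[ℂ] (e 0 ⊗ₜ[ℂ] e 1))
    + p.1 1 0 • (e 0 ⊗ₜ[ℂ] (e 1 ⊗ₜ[ℂ] e 0)) + p.1 1 1 • (e 0 ⊗ₜ[ℂ] (e 1 ⊗ₜ[ℂ] e 1))
    + p.2 0 0 • (e 1 ⊗ₜ[ℂ] (e 0 ⊗ₜ[ℂ] e 0)) + p.2 0 1 • (e 1 ⊗ₜ[ℂ] (e 0 ⊗ₜ[ℂ] e 1))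
    + p.2 1 0 • (e 1 ⊗ₜ[ℂ] (e 1 ⊗ₜ[ℂ] e 0)) + p.2 1 1 • (e 1 ⊗ₜ[ℂ] (e 1 ⊗ₜ[ℂ] e 1))
  map_add' p q := by
    simp only [Prod.fst_add, Prod.snd_add, Matrix.add_apply, add_smul]
    module
  map_smul' c p := by
    simp only [Prod.smul_fst, Prod.smul_snd, Matrix.smul_apply, smul_eq_mul,
      RingHom.id_apply, mul_smul]
    module

lemma vec_expand (x : Fin 2 → ℂ) : x = x 0 • e 0 + x 1 • e 1 := by
  ext i; fin_cases i <;> simp [e]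

lemma Smap_Tmap (Ψ : Qubit3) : Smap (Tmap Ψ) = Ψ := by
  induction Ψ using TensorProduct.induction_on with
  | zero => rw [map_zero, map_zero]
  | add a b ha hb => rw [map_add, map_add, ha, hb]
  | tmul u w =>
    induction w using TensorProduct.induction_on with
    | zero => rw [TensorProduct.tmul_zero, map_zero, map_zero]
    | add a b ha hb =>
      rw [TensorProduct.tmul_add, map_add, map_add, ha, hb]
    | tmul x y =>
      rw [Tmap_tmul]
      show _ = u ⊗ₜ[ℂ] (x ⊗ₜ[ℂ] y)
      conv_rhs => rw [vec_expand u, vec_expand x, vec_expand y]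
      simp only [Smap, LinearMap.coe_mk, AddHom.coe_mk, Matrix.smul_apply, vecMulVec,
        Matrix.of_apply, smul_eq_mul, TensorProduct.add_tmul, TensorProduct.tmul_add,
        TensorProduct.smul_tmul, TensorProduct.tmul_smul, smul_smul]
      module

lemma act_add (A P Q : MatC) (p q : MatC × MatC) :
    act A P Q (p + q) = act A P Q p + act A P Q q := by
  simp only [act, Prod.fst_add, Prod.snd_add, Matrix.mul_add, Matrix.add_mul, smul_add,
    Prod.mk_add_mk, Prod.ext_iff]
  constructor <;> abel

lemma act_zero (A P Q : MatC) : act A P Q (0 : MatC × MatC) = 0 := by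
  simp [act]

lemma Tmap_map3 (A P Q : MatC) (Ψ : Qubit3) :
    Tmap (map3 (Matrix.toLin' A) (Matrix.toLin' P) (Matrix.toLin' Qᵀ) Ψ)
      = act A P Q (Tmap Ψ) := by
  induction Ψ using TensorProduct.induction_on with
  | zero => simp only [_root_.map_zero]; rw [act_zero]
  | add a b ha hb => simp only [_root_.map_add]; rw [ha, hb, act_add]
  | tmul u w =>
    induction w using TensorProduct.induction_on with
    | zero =>
      rw [TensorProduct.tmul_zero]
      simp only [_root_.map_zero]
      rw [act_zero]
    | add a b ha hb =>
      rw [TensorProduct.tmul_add]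
      simp only [_root_.map_add]
      rw [ha, hb, act_add]
    | tmul x y =>
      have hm3 : map3 (Matrix.toLin' A) (Matrix.toLin' P) (Matrix.toLin' Qᵀ)
          (u ⊗ₜ[ℂ] (x ⊗ₜ[ℂ] y))
          = (A *ᵥ u) ⊗ₜ[ℂ] ((P *ᵥ x) ⊗ₜ[ℂ] (Qᵀ *ᵥ y)) := by
        simp [map3, Matrix.toLin'_apply]
      rw [hm3, Tmap_tmul, Tmap_tmul]
      rw [Prod.ext_iff]
      constructor <;>
        · ext i j
          fin_cases i <;> fin_cases j <;>
            simp [act, mulVec, vecMulVec, dotProduct, mul_apply, transpose_apply,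
              Fin.sum_univ_two, Matrix.smul_apply, Matrix.add_apply, smul_eq_mul] <;>
            ring

def matEquiv (A : MatC) (h : A.det ≠ 0) : (Fin 2 → ℂ) ≃ₗ[ℂ] (Fin 2 → ℂ) :=
  LinearEquiv.ofLinear (Matrix.toLin' A) (Matrix.toLin' A⁻¹)
    (by rw [← Matrix.toLin'_mul, mul_nonsing_inv A (isUnitDet h), Matrix.toLin'_one])
    (by rw [← Matrix.toLin'_mul, nonsing_inv_mul A (isUnitDet h), Matrix.toLin'_one])

lemma Tmap_inj {Ψ Φ : Qubit3} (h : Tmap Ψ = Tmap Φ) : Ψ = Φ := by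
  rw [← Smap_Tmap Ψ, ← Smap_Tmap Φ, h]

lemma realize {Ψ : Qubit3} {t : MatC × MatC} {τ : Qubit3} (hτ : Tmap τ = t)
    (hrel : SRel (Tmap Ψ) t) :
    ∃ F1 F2 F3 : (Fin 2 → ℂ) ≃ₗ[ℂ] (Fin 2 → ℂ),
      map3 F1.toLinearMap F2.toLinearMap F3.toLinearMap Ψ = τ := by
  obtain ⟨A, P, Q, hA, hP, hQ, hact⟩ := hrel
  refine ⟨matEquiv A hA, matEquiv P hP, matEquiv Qᵀ (by rwa [det_transpose]), ?_⟩
  apply Tmap_inj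
  rw [hτ, ← hact]
  exact Tmap_map3 A P Q Ψ

lemma vmv_e00 : vecMulVec (e 0) (e 0) = (!![1,0;0,0] : MatC) := by
  ext i j; fin_cases i <;> fin_cases j <;> simp [vecMulVec, e]

lemma vmv_e01 : vecMulVec (e 0) (e 1) = (!![0,1;0,0] : MatC) := by
  ext i j; fin_cases i <;> fin_cases j <;> simp [vecMulVec, e]

lemma vmv_e10 : vecMulVec (e 1) (e 0) = (!![0,0;1,0] : MatC) := by
  ext i j; fin_cases i <;> fin_cases j <;> simp [vecMulVec, e]

lemma vmv_e11 : vecMulVec (e 1) (e 1) = (!![0,0;0,1] : MatC) := by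
  ext i j; fin_cases i <;> fin_cases j <;> simp [vecMulVec, e]

lemma Tt1 : Tmap (e 0 ⊗ₜ[ℂ] (e 0 ⊗ₜ[ℂ] e 0)) = ((!![1,0;0,0] : MatC), 0) := by
  rw [Tmap_tmul, vmv_e00]
  simp [e]

lemma Tt2 : Tmap (e 0 ⊗ₜ[ℂ] (e 0 ⊗ₜ[ℂ] e 0) + e 0 ⊗ₜ[ℂ] (e 1 ⊗ₜ[ℂ] e 1))
    = ((1 : MatC), 0) := by
  rw [_root_.map_add, Tmap_tmul, Tmap_tmul, vmv_e00, vmv_e11]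
  simp [e]
  ext i j; fin_cases i <;> fin_cases j <;> simp [Matrix.one_apply]

lemma Tt3 : Tmap (e 0 ⊗ₜ[ℂ] (e 0 ⊗ₜ[ℂ] e 0) + e 1 ⊗ₜ[ℂ] (e 0 ⊗ₜ[ℂ] e 1))
    = ((!![1,0;0,0] : MatC), (!![0,1;0,0] : MatC)) := by
  rw [_root_.map_add, Tmap_tmul, Tmap_tmul, vmv_e00, vmv_e01]
  simp [e]

lemma Tt4 : Tmap (e 0 ⊗ₜ[ℂ] (e 0 ⊗ₜ[ℂ] e 0) + e 1 ⊗ₜ[ℂ] (e 1 ⊗ₜ[ℂ] e 0))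
    = ((!![1,0;0,0] : MatC), (!![0,0;1,0] : MatC)) := by
  rw [_root_.map_add, Tmap_tmul, Tmap_tmul, vmv_e00, vmv_e10]
  simp [e]

lemma Tt5 : Tmap (e 0 ⊗ₜ[ℂ] (e 0 ⊗ₜ[ℂ] e 0) + e 1 ⊗ₜ[ℂ] (e 1 ⊗ₜ[ℂ] e 1))
    = ((!![1,0;0,0] : MatC), (!![0,0;0,1] : MatC)) := by
  rw [_root_.map_add, Tmap_tmul, Tmap_tmul, vmv_e00, vmv_e11]
  simp [e]

lemma Tt6 : Tmap (e 0 ⊗ₜ[ℂ] (e 0 ⊗ₜ[ℂ] e 1) + e 0 ⊗ₜ[ℂ] (e 1 ⊗ₜ[ℂ] e 0)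
      + e 1 ⊗ₜ[ℂ] (e 0 ⊗ₜ[ℂ] e 0))
    = ((!![0,1;1,0] : MatC), (!![1,0;0,0] : MatC)) := by
  rw [_root_.map_add, _root_.map_add, Tmap_tmul, Tmap_tmul, Tmap_tmul, vmv_e01, vmv_e10,
    vmv_e00]
  simp [e]

theorem three_qubit_slocc_classification (Ψ : Qubit3) (hΨ : Ψ ≠ 0) :
    ∃ F1 F2 F3 : (Fin 2 → ℂ) ≃ₗ[ℂ] (Fin 2 → ℂ),
      map3 F1.toLinearMap F2.toLinearMap F3.toLinearMap Ψ = e 0 ⊗ₜ[ℂ] (e 0 ⊗ₜ[ℂ] e 0) ∨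
      map3 F1.toLinearMap F2.toLinearMap F3.toLinearMap Ψ
        = e 0 ⊗ₜ[ℂ] (e 0 ⊗ₜ[ℂ] e 0) + e 0 ⊗ₜ[ℂ] (e 1 ⊗ₜ[ℂ] e 1) ∨
      map3 F1.toLinearMap F2.toLinearMap F3.toLinearMap Ψ
        = e 0 ⊗ₜ[ℂ] (e 0 ⊗ₜ[ℂ] e 0) + e 1 ⊗ₜ[ℂ] (e 0 ⊗ₜ[ℂ] e 1) ∨
      map3 F1.toLinearMap F2.toLinearMap F3.toLinearMap Ψ
        = e 0 ⊗ₜ[ℂ] (e 0 ⊗ₜ[ℂ] e 0) + e 1 ⊗ₜ[ℂ] (e 1 ⊗ₜ[ℂ] e 0) ∨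
      map3 F1.toLinearMap F2.toLinearMap F3.toLinearMap Ψ
        = e 0 ⊗ₜ[ℂ] (e 0 ⊗ₜ[ℂ] e 0) + e 1 ⊗ₜ[ℂ] (e 1 ⊗ₜ[ℂ] e 1) ∨
      map3 F1.toLinearMap F2.toLinearMap F3.toLinearMap Ψ
        = e 0 ⊗ₜ[ℂ] (e 0 ⊗ₜ[ℂ] e 1) + e 0 ⊗ₜ[ℂ] (e 1 ⊗ₜ[ℂ] e 0)
            + e 1 ⊗ₜ[ℂ] (e 0 ⊗ₜ[ℂ] e 0) := by
  have hT : ¬((Tmap Ψ).1 = 0 ∧ (Tmap Ψ).2 = 0) := by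
    rintro ⟨h1, h2⟩
    have hz : Tmap Ψ = 0 := Prod.ext_iff.mpr ⟨h1, h2⟩
    exact hΨ (Tmap_inj (by rw [hz, _root_.map_zero]))
  rcases mat_class (Tmap Ψ).1 (Tmap Ψ).2 hT with h | h | h | h | h | h
  · obtain ⟨F1, F2, F3, hF⟩ := realize Tt1 h
    exact ⟨F1, F2, F3, Or.inl hF⟩
  · obtain ⟨F1, F2, F3, hF⟩ := realize Tt2 h
    exact ⟨F1, F2, F3, Or.inr (Or.inl hF)⟩
  · obtain ⟨F1, F2, F3, hF⟩ := realize Tt3 h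
    exact ⟨F1, F2, F3, Or.inr (Or.inr (Or.inl hF))⟩
  · obtain ⟨F1, F2, F3, hF⟩ := realize Tt4 h
    exact ⟨F1, F2, F3, Or.inr (Or.inr (Or.inr (Or.inl hF)))⟩
  · obtain ⟨F1, F2, F3, hF⟩ := realize Tt5 h
    exact ⟨F1, F2, F3, Or.inr (Or.inr (Or.inr (Or.inr (Or.inl hF))))⟩
  · obtain ⟨F1, F2, F3, hF⟩ := realize Tt6 h
    exact ⟨F1, F2, F3, Or.inr (Or.inr (Or.inr (Or.inr (Or.inr hF))))⟩

end SLOCCAux
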